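/- Consider the sixteen closed spherical caps on S^3 ⊂ E^4 of radius π/6 centered at the points (±1/2, ±1/2, ±1/2, ±1/2). If C(o, r) is a closed spherical cap (o ∈ S^3, r ∈ (0, π/2)) whose interior is disjoint from the interior of each of these sixteen caps, then r ≤ π/6; moreover, if r = π/6 then o ∈ {±e_1, ±e_2, ±e_3, ±e_4}, where e_1, …, e_4 is the standard orthonormal basis of E^4. -/

import Mathlib

/-!
Give `c` the signs of the coordinates of `o`; then `⟪o, c⟫ = (∑ |oᵢ|) / 2 ≥ ‖o‖ / 2 = 1 / 2`,
so `o` and `c` are at angle at most `π / 3`. Two open caps of radii `a`, `b` (`a + b ≤ π`) whose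
centres are at angle less than `a + b` meet at a point of the great-circle arc joining the
centres, so disjointness forces `r + π / 6 ≤ π / 3`. For `r = π / 6` we get `∑ |oᵢ| = ‖o‖ = 1`,
which only the vectors `±eᵢ` satisfy.
-/

open scoped RealInnerProductSpace

/-- The point `(s₁/2, s₂/2, s₃/2, s₄/2)` in `E⁴`, for signs `s : Fin 4 → ℝ`. -/
noncomputable def fourTangentCenter (s : Fin 4 → ℝ) : EuclideanSpace ℝ (Fin 4) :=
  (2 : ℝ)⁻¹ • ∑ i, s i • EuclideanSpace.single i (1 : ℝ)

open Real InnerProductGeometry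

section Sphere

variable {E : Type*} [NormedAddCommGroup E] [InnerProductSpace ℝ E]

def openCap (o : E) (r : ℝ) : Set E := {x | ‖x‖ = 1 ∧ cos r < ⟪x, o⟫}

theorem exists_norm_eq_one_inner_eq_cos_inner_eq_cos_sub {o c : E} (ho : ‖o‖ = 1)
    (hc : ‖c‖ = 1) (h0 : 0 < angle o c) (hπ : angle o c < π) (t : ℝ) :
    ∃ x : E, ‖x‖ = 1 ∧ ⟪x, o⟫ = cos t ∧ ⟪x, c⟫ = cos (angle o c - t) := by
  set θ := angle o c
  have hoo : ⟪o, o⟫ = 1 := by rw [real_inner_self_eq_norm_sq, ho, one_pow]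
  have hcc : ⟪c, c⟫ = 1 := by rw [real_inner_self_eq_norm_sq, hc, one_pow]
  have hoc : ⟪o, c⟫ = cos θ := by simpa [ho, hc] using (cos_angle_mul_norm_mul_norm o c).symm
  have hsin : sin θ ≠ 0 := (sin_pos_of_pos_of_lt_pi h0 hπ).ne'
  -- `u` is the unit tangent at `o` of the great circle through `o` and `c`
  set u : E := (sin θ)⁻¹ • (c - cos θ • o)
  have huo : ⟪u, o⟫ = 0 := by
    simp only [u, real_inner_smul_left, inner_sub_left, hoo, real_inner_comm o c, hoc]
    ring
  have huu : ⟪u, u⟫ = 1 := by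
    simp only [u, real_inner_smul_left, real_inner_smul_right, inner_sub_left, inner_sub_right,
      hoo, hcc, real_inner_comm o c, hoc]
    field_simp
    linear_combination -sin_sq_add_cos_sq θ
  have huc : ⟪u, c⟫ = sin θ := by
    simp only [u, real_inner_smul_left, inner_sub_left, hcc, hoc]
    field_simp
    linear_combination -sin_sq_add_cos_sq θ
  refine ⟨cos t • o + sin t • u, ?_, ?_, ?_⟩
  · have hxx : ⟪cos t • o + sin t • u, cos t • o + sin t • u⟫ = 1 := by
      simp only [inner_add_left, inner_add_right, real_inner_smul_left, real_inner_smul_right,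
        hoo, huu, huo, real_inner_comm u o]
      linear_combination sin_sq_add_cos_sq t
    rw [norm_eq_sqrt_real_inner, hxx, sqrt_one]
  · simp only [inner_add_left, real_inner_smul_left, hoo, huo]
    ring
  · simp only [inner_add_left, real_inner_smul_left, hoc, huc, cos_sub]
    ring

theorem inner_le_cos_add_of_disjoint_openCap {o c : E} (ho : ‖o‖ = 1) (hc : ‖c‖ = 1)
    {a b : ℝ} (ha : 0 < a) (hb : 0 < b) (hab : a + b ≤ π)
    (h : Disjoint (openCap o a) (openCap c b)) : ⟪o, c⟫ ≤ cos (a + b) := by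
  by_contra! hlt
  set θ := angle o c
  have hθ0 : 0 ≤ θ := angle_nonneg o c
  have hoc : ⟪o, c⟫ = cos θ := by simpa [ho, hc] using (cos_angle_mul_norm_mul_norm o c).symm
  have hθ : θ < a + b := by
    by_contra! hle
    exact hlt.not_ge (hoc ▸ cos_le_cos_of_nonneg_of_le_pi (by positivity) (angle_le_pi o c) hle)
  -- split the angle `θ` in the ratio `a : b`
  set t := θ * a / (a + b)
  have ht : t < a := by
    rw [div_lt_iff₀ (by positivity)]; nlinarith
  have hθt_eq : θ - t = θ * b / (a + b) := by simp only [t]; field_simp; ring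
  have hθt : θ - t < b := by
    rw [hθt_eq, div_lt_iff₀ (by positivity)]; nlinarith
  obtain ⟨x, hx, hxo, hxc⟩ : ∃ x : E, ‖x‖ = 1 ∧ ⟪x, o⟫ = cos t ∧ ⟪x, c⟫ = cos (θ - t) := by
    rcases hθ0.eq_or_lt with hθ_zero | hθ_pos
    · refine ⟨o, ho, ?_, ?_⟩ <;> simp [t, ← hθ_zero, ho, hoc]
    · exact exists_norm_eq_one_inner_eq_cos_inner_eq_cos_sub ho hc hθ_pos (by linarith) t
  have ht0 : 0 ≤ t := by positivity
  refine Set.disjoint_left.1 h (show x ∈ openCap o a from ⟨hx, ?_⟩) ⟨hx, ?_⟩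
  · rw [hxo]; exact cos_lt_cos_of_nonneg_of_le_pi ht0 (by linarith) ht
  · rw [hxc]; exact cos_lt_cos_of_nonneg_of_le_pi (by rw [hθt_eq]; positivity) (by linarith) hθt

end Sphere

namespace EuclideanSpace

variable {ι : Type*} [Fintype ι]

theorem norm_le_sum_abs (x : EuclideanSpace ℝ ι) : ‖x‖ ≤ ∑ i, |x i| := by
  conv_lhs => rw [← (basisFun ι ℝ).sum_repr x]
  refine (norm_sum_le _ _).trans_eq (Finset.sum_congr rfl fun i _ => ?_)
  simp [norm_smul]

theorem exists_eq_single_or_eq_neg_single_of_sum_abs_le [DecidableEq ι]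
    {x : EuclideanSpace ℝ ι} (hx : ‖x‖ = 1) (hsum : ∑ i, |x i| ≤ 1) :
    ∃ i, x = single i 1 ∨ x = -single i 1 := by
  have hsq : ∑ i, x i ^ 2 = 1 := by simpa [hx] using (real_norm_sq_eq x).symm
  have habs_le_one (i : ι) : |x i| ≤ 1 :=
    (Finset.single_le_sum (fun j _ => abs_nonneg (x j)) (Finset.mem_univ i)).trans hsum
  -- `x i ^ 2 ≤ |x i|` termwise, while the sums are `1 ≥ ∑ |x i|`
  have hsq_eq_abs (i : ι) : x i ^ 2 = |x i| := by
    have hnonneg (j : ι) : 0 ≤ |x j| - x j ^ 2 := by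
      nlinarith [sq_abs (x j), abs_nonneg (x j), habs_le_one j]
    have hzero : ∑ j, (|x j| - x j ^ 2) = 0 :=
      le_antisymm (by rw [Finset.sum_sub_distrib, hsq]; linarith)
        (Finset.sum_nonneg fun j _ => hnonneg j)
    linarith [(Finset.sum_eq_zero_iff_of_nonneg fun j _ => hnonneg j).1 hzero i (Finset.mem_univ i)]
  obtain ⟨i, hi⟩ : ∃ i, x i ≠ 0 := by
    by_contra! h
    simp [h] at hsq
  have hxi : |x i| = 1 := by
    have := abs_pos.2 hi
    nlinarith [hsq_eq_abs i, sq_abs (x i)]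
  have hx_eq : x = single i (x i) := by
    ext j
    rw [PiLp.single_apply]
    split_ifs with hji
    · rw [hji]
    · have hpair := Finset.sum_le_sum_of_subset_of_nonneg (Finset.subset_univ {i, j})
        (fun k _ _ => abs_nonneg (x k))
      rw [Finset.sum_pair (Ne.symm hji)] at hpair
      exact abs_eq_zero.1 (by linarith [abs_nonneg (x j)])
  refine ⟨i, ?_⟩
  rcases abs_eq zero_le_one |>.1 hxi with h | h
  · exact .inl (by rwa [h] at hx_eq)
  · exact .inr (by rw [hx_eq, h]; exact PiLp.single_neg 2 i)

end EuclideanSpace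

theorem fourTangentCenter_apply (s : Fin 4 → ℝ) (j : Fin 4) :
    fourTangentCenter s j = s j / 2 := by
  simp [fourTangentCenter, Pi.single_apply, div_eq_inv_mul]

theorem inner_fourTangentCenter (x : EuclideanSpace ℝ (Fin 4)) (s : Fin 4 → ℝ) :
    ⟪x, fourTangentCenter s⟫ = (∑ i, x i * s i) / 2 := by
  simp only [PiLp.inner_apply, RCLike.inner_apply, conj_trivial, fourTangentCenter_apply,
    Finset.sum_div]
  exact Finset.sum_congr rfl fun i _ => by ring

theorem norm_fourTangentCenter {s : Fin 4 → ℝ} (hs : ∀ i, s i = 1 ∨ s i = -1) :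
    ‖fourTangentCenter s‖ = 1 := by
  have hsq (i : Fin 4) : s i / 2 * s i = 1 / 2 := by rcases hs i with h | h <;> norm_num [h]
  rw [norm_eq_sqrt_real_inner, inner_fourTangentCenter]
  simp only [fourTangentCenter_apply, hsq]
  norm_num

theorem exists_inner_fourTangentCenter_eq_sum_abs (x : EuclideanSpace ℝ (Fin 4)) :
    ∃ s : Fin 4 → ℝ, (∀ i, s i = 1 ∨ s i = -1) ∧
      ⟪x, fourTangentCenter s⟫ = (∑ i, |x i|) / 2 := by
  refine ⟨fun i => if 0 ≤ x i then 1 else -1, fun i => by dsimp only; split_ifs <;> simp, ?_⟩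
  rw [inner_fourTangentCenter]
  congr 1
  refine Finset.sum_congr rfl fun i _ => ?_
  split_ifs with h
  · rw [abs_of_nonneg h, mul_one]
  · rw [abs_of_neg (not_le.1 h), mul_neg_one]

/-- If a closed spherical cap `C(o, r)` on `S³ ⊂ E⁴` has interior disjoint
from the interiors of the sixteen caps of radius `π/6` centered at `(±1/2, ±1/2, ±1/2, ±1/2)`,
then `r ≤ π/6`; moreover if `r = π/6` then `o = ±eᵢ` for some standard basis vector `eᵢ`. -/
theorem cap_packing_with_sixteen_fourTangent_caps (o : EuclideanSpace ℝ (Fin 4)) (r : ℝ)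
    (ho : ‖o‖ = 1) (hr : r ∈ Set.Ioo 0 (Real.pi / 2))
    (hdisj : ∀ s : Fin 4 → ℝ, (∀ i, s i = 1 ∨ s i = -1) →
      Disjoint
        {x : EuclideanSpace ℝ (Fin 4) | ‖x‖ = 1 ∧ Real.cos r < ⟪x, o⟫}
        {x : EuclideanSpace ℝ (Fin 4) |
          ‖x‖ = 1 ∧ Real.cos (Real.pi / 6) < ⟪x, fourTangentCenter s⟫}) :
    r ≤ Real.pi / 6 ∧
      (r = Real.pi / 6 → ∃ i : Fin 4,
        o = EuclideanSpace.single i (1 : ℝ) ∨ o = -EuclideanSpace.single i (1 : ℝ)) := by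
  obtain ⟨hr0, hr2⟩ := hr
  obtain ⟨s, hs, hos⟩ := exists_inner_fourTangentCenter_eq_sum_abs o
  have hsep : (∑ i, |o i|) / 2 ≤ cos (r + π / 6) :=
    hos ▸ inner_le_cos_add_of_disjoint_openCap ho (norm_fourTangentCenter hs) hr0
      (by positivity) (by linarith) (hdisj s hs)
  have hsum : 1 ≤ ∑ i, |o i| := ho ▸ EuclideanSpace.norm_le_sum_abs o
  have hcos : cos (π / 3) ≤ cos (r + π / 6) := by rw [cos_pi_div_three]; linarith
  have hr6 : r + π / 6 ≤ π / 3 :=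
    (strictAntiOn_cos.le_iff_ge ⟨by positivity, by linarith⟩ ⟨by positivity, by linarith⟩).1 hcos
  refine ⟨by linarith, fun hr_eq => ?_⟩
  rw [hr_eq, show π / 6 + π / 6 = π / 3 by ring, cos_pi_div_three] at hsep
  exact EuclideanSpace.exists_eq_single_or_eq_neg_single_of_sum_abs_le ho (by linarith)
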